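/- Let k ≥ 1 be an integer and s : ℝ^{2n} → ℂ a smooth k-quasi-periodic function. Then for all m ∈ ℤ^n and λ ∈ ℤ^n, the Weil–Brezin coefficients satisfy (s)_{m+kλ} = (s)_m as functions on ℝ^n; i.e. the Weil–Brezin coefficient of s at m depends only on the class of m in (ℤ/kℤ)^n. -/

import Mathlib

open MeasureTheory Complex
open scoped Real

noncomputable section

/-- The unit box `[0,1]^n` in `ℝ^n`. -/
def box (n : ℕ) : Set (Fin n → ℝ) := Set.univ.pi fun _ => Set.Icc (0:ℝ) 1

/-- `k`-quasi-periodicity of `s : ℝ^{2n} → ℂ`, written in coordinates `u = (x,y)`,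
`λ = (a,b)`: `s(u+λ) = α(λ)^k e^{-kπ√-1 ω(u,λ)} s(u)`, where
`α(λ) = (-1)^{Σ a_i b_i}` and `ω((x,y),(a,b)) = Σ (y_i a_i − x_i b_i)`. -/
def QuasiPeriodic (n k : ℕ) (s : (Fin n → ℝ) × (Fin n → ℝ) → ℂ) : Prop :=
  ∀ (x y : Fin n → ℝ) (a b : Fin n → ℤ),
    s (x + fun i => (a i : ℝ), y + fun i => (b i : ℝ)) =
      ((-1 : ℂ) ^ (∑ i, a i * b i)) ^ k *
        Complex.exp (-(k : ℂ) * π * Complex.I *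
          ∑ i, ((y i : ℂ) * (a i : ℂ) - (x i : ℂ) * (b i : ℂ))) *
        s (x, y)

/-- The Weil–Brezin coefficient of `s` at `m ∈ ℤ^n` (with `ℏ = 1/k`):
`(s)_m(y) = ∫_{[0,1]^n} s̃(x, y + ℏm) e^{-2π√-1 m·x} dx`, where
`s̃(x,y) = e^{kπ√-1 x·y} s(x,y)`. -/
def wb (n k : ℕ) (s : (Fin n → ℝ) × (Fin n → ℝ) → ℂ) (m : Fin n → ℤ) (y : Fin n → ℝ) : ℂ :=
  ∫ x in box n,
    Complex.exp ((k : ℂ) * π * Complex.I * ∑ i, (x i : ℂ) * ((y i : ℂ) + (m i : ℂ) / k)) *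
        s (x, y + fun i => (m i : ℝ) / k) *
      Complex.exp (-2 * π * Complex.I * ∑ i, (m i : ℂ) * (x i : ℂ))

theorem QuasiPeriodic.apply_add_intCast_snd {n k : ℕ} {s : (Fin n → ℝ) × (Fin n → ℝ) → ℂ}
    (hqp : QuasiPeriodic n k s) (x y : Fin n → ℝ) (b : Fin n → ℤ) :
    s (x, y + fun i => (b i : ℝ)) = exp (k * π * I * ∑ i, (x i : ℂ) * b i) * s (x, y) := by
  have h := hqp x y 0 b
  simp only [Pi.zero_apply, Int.cast_zero, zero_mul, Finset.sum_const_zero,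
    zpow_zero, one_pow, one_mul, mul_zero, zero_sub, Finset.sum_neg_distrib] at h
  convert h using 3
  · funext i; simp
  · ring

theorem add_intCast_add_mul_div {n k : ℕ} (hk : (k : ℝ) ≠ 0) (y : Fin n → ℝ) (m lam : Fin n → ℤ) :
    (y + fun i => ((m i + k * lam i : ℤ) : ℝ) / k) =
      (y + fun i => (m i : ℝ) / k) + fun i => (lam i : ℝ) := by
  funext i
  simp only [Pi.add_apply]
  push_cast
  field_simp
  ring

theorem statement16_general (n : ℕ) (k : ℕ) (hk : 1 ≤ k)
    (s : (Fin n → ℝ) × (Fin n → ℝ) → ℂ)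
    (hqp : QuasiPeriodic n k s) :
    ∀ (m lam : Fin n → ℤ) (y : Fin n → ℝ),
      wb n k s (fun i => m i + (k : ℤ) * lam i) y = wb n k s m y := by
  intro m lam y
  have hk0 : (k : ℂ) ≠ 0 := by exact_mod_cast (by omega : k ≠ 0)
  unfold wb
  congr 1 with x
  rw [add_intCast_add_mul_div (by exact_mod_cast hk0), hqp.apply_add_intCast_snd]
  -- the phase `e^{kπ√-1 x·λ}` from quasi-periodicity cancels the shifts of the two exponentials
  have hphase : (k : ℂ) * π * I * ∑ i, (x i : ℂ) * ((y i : ℂ) + ((m i + k * lam i : ℤ) : ℂ) / k) +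
        k * π * I * ∑ i, (x i : ℂ) * (lam i : ℂ) +
        -2 * π * I * ∑ i, ((m i + k * lam i : ℤ) : ℂ) * (x i : ℂ) =
      k * π * I * ∑ i, (x i : ℂ) * ((y i : ℂ) + (m i : ℂ) / k) +
        -2 * π * I * ∑ i, (m i : ℂ) * (x i : ℂ) := by
    simp only [Finset.mul_sum, ← Finset.sum_add_distrib]
    refine Finset.sum_congr rfl fun i _ => ?_
    push_cast
    field_simp
    ring
  have hexp := congrArg exp hphase
  simp only [exp_add] at hexp
  push_cast at hexp ⊢
  linear_combination s (x, y + fun i => (m i : ℝ) / k) * hexp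

/-- For a smooth `k`-quasi-periodic `s : ℝ^{2n} → ℂ`, the Weil–Brezin coefficients satisfy
`(s)_{m+kλ} = (s)_m` for all `m, λ ∈ ℤ^n`; i.e. `(s)_m` depends only on the class of `m`
in `(ℤ/kℤ)^n`. -/
theorem statement16 (n : ℕ) (hn : 1 ≤ n) (k : ℕ) (hk : 1 ≤ k)
    (s : (Fin n → ℝ) × (Fin n → ℝ) → ℂ)
    (hs : ContDiff ℝ (⊤ : ℕ∞) s) (hqp : QuasiPeriodic n k s) :
    ∀ (m lam : Fin n → ℤ) (y : Fin n → ℝ),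
      wb n k s (fun i => m i + (k : ℤ) * lam i) y = wb n k s m y :=
  statement16_general n k hk s hqp
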